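/- Two-stage sequential games as composed open games have Nash equilibria as equilibria: let X, X', Y be nonempty types, f : X → X' a function and U : X × Y → ℝ × ℝ with components U₁, U₂. Let L : (X,ℝ) → (X × X', PUnit × ℝ) be the zero-player open game of the lens with forward part x ↦ (x, f(x)) and backward part (x,(u,r)) ↦ r; let Id_{(X,ℝ)} be the zero-player open game of the identity lens on (X,ℝ); and let K : (X × Y, ℝ × ℝ) → (PUnit, PUnit) be the zero-player open game of the lens with forward part constant () and backward part ((x,y),()) ↦ (U₂(x,y), U₁(x,y)). Then the closed open game G := K ∘ (Id_{(X,ℝ)} ⊗ D_{Y|X'}) ∘ L ∘ D_X has strategy profiles in bijection with X × (X' → Y), and at the trivial context, the strategy profile corresponding to (x, σ) is an equilibrium if and only if (∀ x', U₁(x', σ(f(x'))) ≤ U₁(x, σ(f(x)))) and (∀ y', U₂(x, y') ≤ U₂(x, σ(f(x)))), i.e. (x,σ) is a pure-strategy Nash equilibrium of the sequential game in which player 1 chooses x and player 2 chooses y after observing f(x). -/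
import Mathlib


/-- A lens `(X,S) → (Y,R)` between types. -/
structure Lens (X S Y R : Type) where
  v : X → Y
  u : X × R → S

/-- Composition of lenses (diagrammatic order: `l.comp m` is `m ∘ l`). -/
def Lens.comp {X S Y R Z Q : Type} (l : Lens X S Y R) (m : Lens Y R Z Q) :
    Lens X S Z Q where
  v x := m.v (l.v x)
  u p := l.u (p.1, m.u (l.v p.1, p.2))

/-- The identity lens on `(X,S)`. -/
def Lens.id (X S : Type) : Lens X S X S where
  v x := x
  u p := p.2

/-- The tensor of lenses. -/
def Lens.tensor {X₁ S₁ Y₁ R₁ X₂ S₂ Y₂ R₂ : Type}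
    (l : Lens X₁ S₁ Y₁ R₁) (m : Lens X₂ S₂ Y₂ R₂) :
    Lens (X₁ × X₂) (S₂ × S₁) (Y₁ × Y₂) (R₂ × R₁) where
  v x := (l.v x.1, m.v x.2)
  u p := (m.u (p.1.2, p.2.1), l.u (p.1.1, p.2.2))

/-- An open game `(X,S) → (Y,R)`: a type of strategy profiles, a labelling
function into lenses, and an equilibrium relation between strategy profiles
and contexts `(h,k)` with `h : X`, `k : Y → R`. -/
structure Game (X S Y R : Type) where
  Strat : Type
  play : Strat → Lens X S Y R
  eq : Strat → X × (Y → R) → Prop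

/-- Sequential composition of open games. -/
def Game.comp {X S Y R Z Q : Type} (G : Game X S Y R) (H : Game Y R Z Q) :
    Game X S Z Q where
  Strat := G.Strat × H.Strat
  play s := (G.play s.1).comp (H.play s.2)
  eq s c :=
    G.eq s.1 (c.1, fun y => (H.play s.2).u (y, c.2 ((H.play s.2).v y))) ∧
      H.eq s.2 ((G.play s.1).v c.1, c.2)

/-- Tensor (simultaneous play) of open games. -/
def Game.tensor {X₁ S₁ Y₁ R₁ X₂ S₂ Y₂ R₂ : Type}
    (G : Game X₁ S₁ Y₁ R₁) (H : Game X₂ S₂ Y₂ R₂) :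
    Game (X₁ × X₂) (S₂ × S₁) (Y₁ × Y₂) (R₂ × R₁) where
  Strat := G.Strat × H.Strat
  play s := (G.play s.1).tensor (H.play s.2)
  eq s c :=
    G.eq s.1 (c.1.1, fun y₁ => (c.2 (y₁, (H.play s.2).v c.1.2)).2) ∧
      H.eq s.2 (c.1.2, fun y₂ => (c.2 ((G.play s.1).v c.1.1, y₂)).1)

/-- The zero-player open game of a lens. -/
def Game.ofLens {X S Y R : Type} (l : Lens X S Y R) : Game X S Y R where
  Strat := PUnit
  play _ := l
  eq _ _ := True

/-- The closed decision `D_X : (PUnit,PUnit) → (X,ℝ)`. -/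
def closedDecision (X : Type) [Nonempty X] : Game PUnit PUnit X ℝ where
  Strat := X
  play x := ⟨fun _ => x, fun _ => PUnit.unit⟩
  eq x c := ∀ x', c.2 x' ≤ c.2 x

/-- The decision `D_{Y|X'} : (X',PUnit) → (Y,ℝ)`. -/
def decision (X' Y : Type) [Nonempty X'] [Nonempty Y] : Game X' PUnit Y ℝ where
  Strat := X' → Y
  play σ := ⟨σ, fun _ => PUnit.unit⟩
  eq σ c := ∀ y, c.2 y ≤ c.2 (σ c.1)

/-- The lens `(X,ℝ) → (X × X', PUnit × ℝ)` copying `x` and computing the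
observation `f x`. -/
def obsLens {X X' : Type} (f : X → X') : Lens X ℝ (X × X') (PUnit × ℝ) where
  v x := (x, f x)
  u p := p.2.2

/-- The payoff lens `(X × Y, ℝ × ℝ) → (PUnit, PUnit)` of payoff matrix `U`. -/
def payoffLens {X Y : Type} (U : X × Y → ℝ × ℝ) :
    Lens (X × Y) (ℝ × ℝ) PUnit PUnit where
  v _ := PUnit.unit
  u p := ((U p.1).2, (U p.1).1)

/-- The two-stage sequential game `K ∘ (Id_{(X,ℝ)} ⊗ D_{Y|X'}) ∘ L ∘ D_X`. -/
def seqGame (X X' Y : Type) [Nonempty X] [Nonempty X'] [Nonempty Y]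
    (f : X → X') (U : X × Y → ℝ × ℝ) : Game PUnit PUnit PUnit PUnit :=
  (((closedDecision X).comp (Game.ofLens (obsLens f))).comp
      ((Game.ofLens (Lens.id X ℝ)).tensor (decision X' Y))).comp
    (Game.ofLens (payoffLens U))

/-- Two-stage sequential games as composed open games have exactly the
pure-strategy Nash equilibria as equilibria. -/
theorem sequential_game_nash (X X' Y : Type) [Nonempty X] [Nonempty X'] [Nonempty Y]
    (f : X → X') (U : X × Y → ℝ × ℝ) :
    Nonempty ((seqGame X X' Y f U).Strat ≃ (X × (X' → Y))) ∧
    ∀ (x : X) (σ : X' → Y),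
      (seqGame X X' Y f U).eq (((x, PUnit.unit), (PUnit.unit, σ)), PUnit.unit)
          (PUnit.unit, fun _ => PUnit.unit) ↔
        (∀ x', (U (x', σ (f x'))).1 ≤ (U (x, σ (f x))).1) ∧
          (∀ y', (U (x, y')).2 ≤ (U (x, σ (f x))).2) := by
  constructor
  · exact ⟨{ toFun := fun s => (s.1.1.1, s.1.2.2)
             invFun := fun p => (((p.1, PUnit.unit), (PUnit.unit, p.2)), PUnit.unit)
             left_inv := fun s => rfl
             right_inv := fun p => rfl }⟩
  · intro x σ
    simp only [seqGame, Game.comp, Game.tensor, Game.ofLens, closedDecision, decision,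
      obsLens, payoffLens, Lens.comp, Lens.tensor, Lens.id]
    tauto
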